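/- arXiv:1410.0573 — 8 statements merged into one kernel-verified Lean document; each statement's English description precedes it below -/
import Mathlib

section
/- The first-octant chain code of a discrete circle is a word over the alphabet {0,1}; equivalently, the digitized boundary of a discrete circle drops by at most one unit per horizontal step throughout the first octant. Precisely: for all natural numbers N and x such that (x+1)^2 ≤ N and x ≤ Nat.sqrt (N − (x+1)^2) (i.e. the column x+1 still lies in the first octant of the circle of squared radius N), one has Nat.sqrt (N − x^2) ≤ Nat.sqrt (N − (x+1)^2) + 1. -/
/-- The first-octant chain code of a discrete circle is a word over {0,1}:
the digitized boundary height `Nat.sqrt (N - x^2)` drops by at most one unit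
per horizontal step throughout the first octant. -/
theorem discrete_circle_chain_code_drop_le_one (N x : ℕ)
    (h1 : (x + 1) ^ 2 ≤ N) (h2 : x ≤ Nat.sqrt (N - (x + 1) ^ 2)) :
    Nat.sqrt (N - x ^ 2) ≤ Nat.sqrt (N - (x + 1) ^ 2) + 1 := by
  set s := Nat.sqrt (N - (x + 1) ^ 2) with hs
  have hlt : N - (x + 1) ^ 2 < (s + 1) * (s + 1) := Nat.lt_succ_sqrt _
  have hsum : N - x ^ 2 = (N - (x + 1) ^ 2) + (2 * x + 1) := by
    have : (x + 1) ^ 2 = x ^ 2 + (2 * x + 1) := by ring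
    omega
  have key : N - x ^ 2 < (s + 2) ^ 2 := by nlinarith
  have := Nat.sqrt_lt'.mpr key
  omega
end

section
/- No line segment of the chain code of a discrete circle has the form 10^n 10^{n+1} 10^{n+2}. The underlying geometric fact is: for all integers x, y, n, N, if x² + y² ≤ N and (x + 3n + 6)² + (y − 3)² ≤ N, then (x + 2n + 4)² + (y − 2)² ≤ N. (The point (x+2n+4, y−2) lies on the chord joining (x,y) to (x+3n+6, y−3), namely it is their convex combination with weights 1/3 and 2/3, so it belongs to the disc; but a chain code subword 10^n 10^{n+1} 10^{n+2} starting at (x,y) would force this point to lie strictly outside the disc, a contradiction.) -/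
/-- No line segment of the chain code of a discrete circle has the form
`10^n 10^{n+1} 10^{n+2}`: the point `(x+2n+4, y-2)` lies on the chord joining
`(x, y)` to `(x+3n+6, y-3)`, so it belongs to the disc. -/
theorem chord_point_in_disc_thirds (x y n N : ℤ)
    (h1 : x ^ 2 + y ^ 2 ≤ N)
    (h2 : (x + 3 * n + 6) ^ 2 + (y - 3) ^ 2 ≤ N) :
    (x + 2 * n + 4) ^ 2 + (y - 2) ^ 2 ≤ N := by
  nlinarith [sq_nonneg (n+2), h1, h2]
end

section
/- Composition of two chain codes is computed by a max-plus convolution of their partial sums: for any sequences u, v : ℕ → ℕ, letting U n = Σ_{i=0}^{n} u i and V n = Σ_{j=0}^{n} v j, and defining the staircase regions S_U = {(p,q) ∈ ℕ × ℕ : p ≤ U q} and S_V = {(p,q) ∈ ℕ × ℕ : p ≤ V q}, the Minkowski sum S_U + S_V = {(p₁+p₂, q₁+q₂) : (p₁,q₁) ∈ S_U, (p₂,q₂) ∈ S_V} equals {(p,q) ∈ ℕ × ℕ : p ≤ max_{0 ≤ n ≤ q} (U n + V (q−n))}. -/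
open Pointwise

/-- Composition of two chain codes is computed by a max-plus convolution of
their partial sums: the Minkowski sum of the two staircase regions
`{(p,q) : p ≤ U q}` and `{(p,q) : p ≤ V q}` is the staircase region of the
max-plus convolution of `U` and `V`. -/
theorem staircase_minkowski_sum (u v : ℕ → ℕ) :
    let U : ℕ → ℕ := fun n => ∑ i ∈ Finset.range (n + 1), u i
    let V : ℕ → ℕ := fun n => ∑ j ∈ Finset.range (n + 1), v j
    ({pq : ℕ × ℕ | pq.1 ≤ U pq.2} + {pq : ℕ × ℕ | pq.1 ≤ V pq.2}) =
      {pq : ℕ × ℕ |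
        pq.1 ≤ (Finset.range (pq.2 + 1)).sup (fun n => U n + V (pq.2 - n))} := by
  intro U V
  ext ⟨p, q⟩
  rw [Set.mem_add]
  constructor
  · rintro ⟨⟨p1, q1⟩, h1, ⟨p2, q2⟩, h2, h⟩
    simp only [Set.mem_setOf_eq] at h1 h2 ⊢
    have hp : p1 + p2 = p := congrArg Prod.fst h
    have hq : q1 + q2 = q := congrArg Prod.snd h
    subst hp hq
    have hmem : q1 ∈ Finset.range (q1 + q2 + 1) := by
      simp only [Finset.mem_range]; omega
    calc p1 + p2 ≤ U q1 + V (q1 + q2 - q1) := by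
          simpa using Nat.add_le_add h1 h2
      _ ≤ _ := Finset.le_sup (f := fun n => U n + V (q1 + q2 - n)) hmem
  · intro hp
    simp only [Set.mem_setOf_eq] at hp
    obtain ⟨n, hn, hle⟩ : ∃ n ∈ Finset.range (q + 1), p ≤ U n + V (q - n) := by
      obtain ⟨n, hn, hsup⟩ := Finset.exists_mem_eq_sup (Finset.range (q + 1))
        (by simp) (fun n => U n + V (q - n))
      exact ⟨n, hn, hsup ▸ hp⟩
    rw [Finset.mem_range] at hn
    refine ⟨(min p (U n), n), ?_, (p - min p (U n), q - n), ?_, ?_⟩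
    · simp only [Set.mem_setOf_eq]
      exact min_le_right _ _
    · simp only [Set.mem_setOf_eq]
      omega
    · simp only [Prod.mk_add_mk, Prod.mk.injEq]
      omega
end

section
/- Composition Theorem (combinatorial form): the chain code of the composition of two chain codes is obtained by merging their line segments in order of increasing gradient, equivalently decreasing segment length. Precisely: let p, q ∈ ℕ and u, v : ℕ → ℕ satisfy u (i+1) ≤ u i for all 1 ≤ i < p and v (j+1) ≤ v j for all 1 ≤ j < q (the tail segment lengths are nonincreasing, i.e. the gradients are increasing). Then for every k ≤ p + q, max over pairs (n,m) with n + m = k, n ≤ p, m ≤ q of (Σ_{i=0}^{n} u i + Σ_{j=0}^{m} v j) equals u 0 + v 0 + (the sum of the k largest elements of the multiset {u 1, …, u p} ∪ {v 1, …, v q}, counted with multiplicity). -/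
private lemma take_succ_le_aux (x : ℕ) :
    ∀ (l : List ℕ), (∀ y ∈ l, y ≤ x) → ∀ c, (l.take (c + 1)).sum ≤ x + (l.take c).sum := by
  intro l
  induction l with
  | nil => intro _ c; simp
  | cons y l ih =>
    intro h c
    cases c with
    | zero => simpa using h y (by simp)
    | succ c =>
      simp only [List.take_succ_cons, List.sum_cons]
      have := ih (fun z hz => h z (by simp [hz])) c
      omega

private lemma sub_sum_le :
    ∀ (l : List ℕ), l.Pairwise (· ≥ ·) → ∀ S : Multiset ℕ, S ≤ ↑l →
      S.sum ≤ (l.take (Multiset.card S)).sum := by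
  intro l
  induction l with
  | nil =>
    intro _ S hS
    have : S = 0 := Multiset.le_zero.mp (by simpa using hS)
    simp [this]
  | cons x l ih =>
    intro hl S hS
    by_cases hx : x ∈ S
    · obtain ⟨S', rfl⟩ := Multiset.exists_cons_of_mem hx
      have hS' : S' ≤ ↑l := (Multiset.cons_le_cons_iff x).mp (by
        rwa [← Multiset.cons_coe] at hS)
      have h1 := ih hl.of_cons S' hS'
      simpa using Nat.add_le_add_left h1 x
    · have hS' : S ≤ ↑l := by
        rw [← Multiset.cons_coe] at hS
        exact (Multiset.le_cons_of_notMem hx).mp hS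
      have h1 := ih hl.of_cons S hS'
      rcases Nat.eq_zero_or_pos (Multiset.card S) with hc | hc
      · simp [Multiset.card_eq_zero.mp hc]
      · obtain ⟨c, hcc⟩ : ∃ c, Multiset.card S = c + 1 :=
          ⟨Multiset.card S - 1, by omega⟩
        rw [hcc, List.take_succ_cons, List.sum_cons]
        calc S.sum ≤ (List.take (c + 1) l).sum := by rw [← hcc]; exact h1
          _ ≤ x + (List.take c l).sum :=
            take_succ_le_aux x l (fun y hy => List.rel_of_pairwise_cons hl hy) c

private lemma count_gt_le (a : ℕ → ℕ) (p n x : ℕ)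
    (h : ∀ i, n ≤ i → i < p → a i ≤ x) :
    (((Multiset.range p).map a).filter (fun y => x < y)).card ≤ n := by
  rcases le_or_gt p n with hp | hp
  · calc (((Multiset.range p).map a).filter (fun y => x < y)).card
        ≤ Multiset.card ((Multiset.range p).map a) :=
          Multiset.card_le_card (Multiset.filter_le _ _)
      _ = p := by simp
      _ ≤ n := hp
  · have hpn : p = n + (p - n) := by omega
    rw [hpn, Multiset.range_add, Multiset.map_add, Multiset.filter_add]
    have h2 : ((((Multiset.range (p - n)).map (n + ·)).map a).filter (fun y => x < y)) = 0 := by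
      rw [Multiset.filter_eq_nil]
      intro y hy
      simp only [Multiset.mem_map, Multiset.mem_range] at hy
      obtain ⟨z, ⟨i, hi, rfl⟩, rfl⟩ := hy
      have := h (n + i) (by omega) (by omega)
      omega
    rw [h2]
    calc Multiset.card ((((Multiset.range n).map a).filter (fun y => x < y)) + 0)
        ≤ Multiset.card ((Multiset.range n).map a) := by
          rw [add_zero]
          exact Multiset.card_le_card (Multiset.filter_le _ _)
      _ = n := by simp

private lemma get_le_of_count (L : List ℕ) (hL : L.Pairwise (· ≥ ·)) (k : ℕ) (hk : k < L.length)
    (x : ℕ) (hc : ((↑L : Multiset ℕ).filter (fun y => x < y)).card ≤ k) :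
    L.get ⟨k, hk⟩ ≤ x := by
  by_contra hgt
  push_neg at hgt
  have hall : ∀ y ∈ L.take (k + 1), x < y := by
    intro y hy
    have hlen : (L.take (k + 1)).length = k + 1 := by
      rw [List.length_take]; omega
    obtain ⟨i, hi, rfl⟩ := List.mem_iff_get.mp hy
    have hi' : (i : ℕ) < k + 1 := by omega
    have he : (L.take (k + 1)).get i = L.get ⟨i, by omega⟩ := by
      simp [List.get_eq_getElem, List.getElem_take]
    rw [he]
    have : L.get ⟨i, by omega⟩ ≥ L.get ⟨k, hk⟩ :=
      hL.rel_get_of_le (by simp [Fin.le_def]; omega)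
    omega
  have hsub : ((L.take (k + 1) : List ℕ) : Multiset ℕ) ≤ ↑L := by
    exact (List.take_sublist _ _).subperm
  have h1 : ((↑(L.take (k + 1)) : Multiset ℕ).filter (fun y => x < y)) = ↑(L.take (k + 1)) :=
    Multiset.filter_eq_self.mpr (by simpa using hall)
  have h2 := Multiset.card_le_card (Multiset.filter_le_filter (fun y => x < y) hsub)
  rw [h1] at h2
  simp only [Multiset.coe_card, List.length_take] at h2
  omega

private lemma exists_split (p q : ℕ) (a b : ℕ → ℕ)
    (ha : ∀ i j, i ≤ j → j < p → a j ≤ a i)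
    (hb : ∀ i j, i ≤ j → j < q → b j ≤ b i) :
    ∀ k, k ≤ p + q → ∃ n m, n + m = k ∧ n ≤ p ∧ m ≤ q ∧
      ((((Multiset.range p).map a + (Multiset.range q).map b).sort (· ≥ ·)).take k).sum
        ≤ ∑ i ∈ Finset.range n, a i + ∑ j ∈ Finset.range m, b j := by
  set M : Multiset ℕ := (Multiset.range p).map a + (Multiset.range q).map b with hM
  set L : List ℕ := M.sort (· ≥ ·) with hL
  have hLsort : L.Pairwise (· ≥ ·) := Multiset.pairwise_sort _ _
  have hLlen : L.length = p + q := by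
    rw [hL, Multiset.length_sort, hM]; simp
  have hLM : (↑L : Multiset ℕ) = M := Multiset.sort_eq _ _
  intro k
  induction k with
  | zero => exact fun _ => ⟨0, 0, rfl, Nat.zero_le _, Nat.zero_le _, by simp⟩
  | succ k ihk =>
    intro hk
    obtain ⟨n, m, hnm, hn, hm, hsum⟩ := ihk (by omega)
    have hkl : k < L.length := by omega
    have htake : (L.take (k + 1)).sum = (L.take k).sum + L.get ⟨k, hkl⟩ := by
      simpa using List.sum_take_succ L k hkl
    -- general counting bound
    have key : ∀ x : ℕ, (∀ i, n ≤ i → i < p → a i ≤ x) → (∀ j, m ≤ j → j < q → b j ≤ x) →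
        L.get ⟨k, hkl⟩ ≤ x := by
      intro x hax hbx
      apply get_le_of_count L hLsort k hkl x
      rw [hLM, hM, Multiset.filter_add]
      have c1 := count_gt_le a p n x hax
      have c2 := count_gt_le b q m x hbx
      rw [Multiset.card_add]
      omega
    rcases Nat.lt_or_ge n p with hnp | hnp
    · rcases Nat.lt_or_ge m q with hmq | hmq
      · -- both available
        have hmax := key (max (a n) (b m))
          (fun i hi hip => le_trans (ha n i hi hip) (le_max_left _ _))
          (fun j hj hjq => le_trans (hb m j hj hjq) (le_max_right _ _))
        rcases max_cases (a n) (b m) with ⟨he, _⟩ | ⟨he, _⟩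
        · refine ⟨n + 1, m, by omega, by omega, hm, ?_⟩
          rw [htake, Finset.sum_range_succ]
          omega
        · refine ⟨n, m + 1, by omega, hn, by omega, ?_⟩
          rw [htake, Finset.sum_range_succ]
          omega
      · -- m = q, extend n
        have hx := key (a n)
          (fun i hi hip => ha n i hi hip)
          (fun j hj hjq => absurd hjq (by omega))
        refine ⟨n + 1, m, by omega, by omega, hm, ?_⟩
        rw [htake, Finset.sum_range_succ]
        omega
    · -- n = p, must have m < q
      have hmq : m < q := by omega
      have hx := key (b m)
        (fun i hi hip => absurd hip (by omega))
        (fun j hj hjq => hb m j hj hjq)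
      refine ⟨n, m + 1, by omega, hn, by omega, ?_⟩
      rw [htake, Finset.sum_range_succ]
      omega


/-- Composition Theorem (combinatorial form): if the tail segment lengths of
two chain codes are nonincreasing (i.e. the gradients of their line segments
are increasing), then the `k`-th cumulative length of their composition equals
`u 0 + v 0` plus the sum of the `k` largest elements of the multiset of tail
segment lengths of `u` and `v`. -/
theorem composition_theorem (p q : ℕ) (u v : ℕ → ℕ)
    (hu : ∀ i, 1 ≤ i → i < p → u (i + 1) ≤ u i)
    (hv : ∀ j, 1 ≤ j → j < q → v (j + 1) ≤ v j) :
    ∀ k ≤ p + q,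
      (((Finset.range (k + 1)).filter (fun n => n ≤ p ∧ k - n ≤ q)).sup
          (fun n => ∑ i ∈ Finset.range (n + 1), u i +
            ∑ j ∈ Finset.range (k - n + 1), v j)) =
        u 0 + v 0 +
          ((((Multiset.range p).map (fun i => u (i + 1)) +
              (Multiset.range q).map (fun j => v (j + 1))).sort (· ≥ ·)).take k).sum := by
  have ha : ∀ i j, i ≤ j → j < p → u (j + 1) ≤ u (i + 1) := by
    intro i j
    induction j with
    | zero => intro hij _; rw [Nat.le_zero.mp hij]
    | succ j ihj =>
      intro hij hjp
      rcases Nat.eq_or_lt_of_le hij with rfl | h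
      · exact le_rfl
      · exact le_trans (hu (j + 1) (by omega) hjp) (ihj (by omega) (by omega))
  have hb : ∀ i j, i ≤ j → j < q → v (j + 1) ≤ v (i + 1) := by
    intro i j
    induction j with
    | zero => intro hij _; rw [Nat.le_zero.mp hij]
    | succ j ihj =>
      intro hij hjq
      rcases Nat.eq_or_lt_of_le hij with rfl | h
      · exact le_rfl
      · exact le_trans (hv (j + 1) (by omega) hjq) (ihj (by omega) (by omega))
  intro k hk
  apply le_antisymm
  · apply Finset.sup_le
    intro n hn
    simp only [Finset.mem_filter, Finset.mem_range] at hn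
    obtain ⟨hnk, hnp, hmq⟩ := hn
    have hnk' : n ≤ k := by omega
    set m := k - n with hm
    have hS : ((Multiset.range n).map (fun i => u (i + 1)) +
        (Multiset.range m).map (fun j => v (j + 1))) ≤
        ((Multiset.range p).map (fun i => u (i + 1)) +
          (Multiset.range q).map (fun j => v (j + 1))) :=
      add_le_add (Multiset.map_le_map (Multiset.range_le.mpr hnp))
        (Multiset.map_le_map (Multiset.range_le.mpr hmq))
    have hcard : Multiset.card ((Multiset.range n).map (fun i => u (i + 1)) +
        (Multiset.range m).map (fun j => v (j + 1))) = k := by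
      simp only [Multiset.card_add, Multiset.card_map, Multiset.card_range]
      omega
    have hsorted := Multiset.pairwise_sort (α := ℕ)
      ((Multiset.range p).map (fun i => u (i + 1)) +
        (Multiset.range q).map (fun j => v (j + 1))) (· ≥ ·)
    have hmain := sub_sum_le _ hsorted
      ((Multiset.range n).map (fun i => u (i + 1)) +
        (Multiset.range m).map (fun j => v (j + 1)))
      (by rw [Multiset.sort_eq]; exact hS)
    rw [hcard] at hmain
    rw [Multiset.sum_add] at hmain
    have e1 : ((Multiset.range n).map (fun i => u (i + 1))).sum =
        ∑ i ∈ Finset.range n, u (i + 1) := by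
      rw [← Finset.range_val]; rfl
    have e2 : ((Multiset.range m).map (fun j => v (j + 1))).sum =
        ∑ j ∈ Finset.range m, v (j + 1) := by
      rw [← Finset.range_val]; rfl
    rw [e1, e2] at hmain
    rw [Finset.sum_range_succ' u n, Finset.sum_range_succ' v m]
    linarith
  · obtain ⟨n, m, hnm, hn, hm, hle⟩ :=
      exists_split p q (fun i => u (i + 1)) (fun j => v (j + 1)) ha hb k hk
    have hmem : n ∈ (Finset.range (k + 1)).filter (fun n => n ≤ p ∧ k - n ≤ q) :=
      Finset.mem_filter.mpr ⟨Finset.mem_range.mpr (by omega), hn, by omega⟩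
    refine le_trans ?_ (Finset.le_sup hmem)
    have hkn : k - n = m := by omega
    rw [hkn, Finset.sum_range_succ' u n, Finset.sum_range_succ' v m]
    linarith
end

section
/- The set of line segments, and hence of gradients, occurring in chain codes of discrete circles is closed under composition: under the hypotheses that u, v : ℕ → ℕ satisfy u (i+1) ≤ u i for all 1 ≤ i < p and v (j+1) ≤ v j for all 1 ≤ j < q, and letting W k = max over pairs (n,m) with n + m = k, n ≤ p, m ≤ q of (Σ_{i=0}^{n} u i + Σ_{j=0}^{m} v j), every increment W (k+1) − W k for 0 ≤ k < p + q is an element of the multiset {u 1, …, u p} ∪ {v 1, …, v q}; in particular the composed chain code contains no segment length (no gradient) not already present in u or v. -/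
/-- The set of line segments (hence of gradients) occurring in chain codes is
closed under composition: every increment of the cumulative lengths of the
composition is a segment length already present in `u` or `v`. -/
theorem composition_increments_closed (p q : ℕ) (u v : ℕ → ℕ)
    (hu : ∀ i, 1 ≤ i → i < p → u (i + 1) ≤ u i)
    (hv : ∀ j, 1 ≤ j → j < q → v (j + 1) ≤ v j) :
    let W : ℕ → ℕ := fun k =>
      ((Finset.range (k + 1)).filter (fun n => n ≤ p ∧ k - n ≤ q)).sup
        (fun n => ∑ i ∈ Finset.range (n + 1), u i +
          ∑ j ∈ Finset.range (k - n + 1), v j)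
    ∀ k, k < p + q →
      W (k + 1) - W k ∈
        (Multiset.range p).map (fun i => u (i + 1)) +
          (Multiset.range q).map (fun j => v (j + 1)) := by
  intro W k hk
  -- antitonicity of u and v on [1, p] and [1, q]
  have humono : ∀ a d, 1 ≤ a → a + d ≤ p → u (a + d) ≤ u a := by
    intro a d
    induction d with
    | zero => intro _ _; simp
    | succ d ih =>
      intro ha h
      have h1 : u (a + d + 1) ≤ u (a + d) := hu (a + d) (by omega) (by omega)
      have h2 : u (a + d) ≤ u a := ih ha (by omega)
      have e : a + (d + 1) = a + d + 1 := by omega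
      rw [e]; exact le_trans h1 h2
  have hvmono : ∀ a d, 1 ≤ a → a + d ≤ q → v (a + d) ≤ v a := by
    intro a d
    induction d with
    | zero => intro _ _; simp
    | succ d ih =>
      intro ha h
      have h1 : v (a + d + 1) ≤ v (a + d) := hv (a + d) (by omega) (by omega)
      have h2 : v (a + d) ≤ v a := ih ha (by omega)
      have e : a + (d + 1) = a + d + 1 := by omega
      rw [e]; exact le_trans h1 h2
  set U : ℕ → ℕ := fun n => ∑ i ∈ Finset.range (n + 1), u i with hU
  set V : ℕ → ℕ := fun m => ∑ j ∈ Finset.range (m + 1), v j with hV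
  have hWdef : ∀ k, W k =
      ((Finset.range (k + 1)).filter (fun n => n ≤ p ∧ k - n ≤ q)).sup
        (fun n => U n + V (k - n)) := fun _ => rfl
  have hmem : ∀ k n, n ≤ k → n ≤ p → k - n ≤ q →
      n ∈ (Finset.range (k + 1)).filter (fun n => n ≤ p ∧ k - n ≤ q) := by
    intro k n h1 h2 h3
    simp only [Finset.mem_filter, Finset.mem_range]
    exact ⟨by omega, h2, h3⟩
  have hle : ∀ k n, n ≤ k → n ≤ p → k - n ≤ q → U n + V (k - n) ≤ W k := by
    intro k n h1 h2 h3
    rw [hWdef]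
    exact Finset.le_sup (f := fun n => U n + V (k - n)) (hmem k n h1 h2 h3)
  -- maximizers for W k and W (k+1)
  have hne1 : ((Finset.range (k + 1)).filter (fun n => n ≤ p ∧ k - n ≤ q)).Nonempty :=
    ⟨min k p, hmem k (min k p) (by omega) (by omega) (by omega)⟩
  have hne2 : ((Finset.range (k + 1 + 1)).filter
      (fun n => n ≤ p ∧ k + 1 - n ≤ q)).Nonempty :=
    ⟨min (k + 1) p, hmem (k + 1) (min (k + 1) p) (by omega) (by omega) (by omega)⟩
  obtain ⟨nk, hnkmem, hnkeq⟩ := Finset.exists_mem_eq_sup _ hne1 (fun n => U n + V (k - n))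
  obtain ⟨n', hn'mem, hn'eq⟩ := Finset.exists_mem_eq_sup _ hne2 (fun n => U n + V (k + 1 - n))
  rw [← hWdef] at hnkeq hn'eq
  simp only [Finset.mem_filter, Finset.mem_range] at hnkmem hn'mem
  obtain ⟨hnk1, hnk2, hnk3⟩ := hnkmem
  obtain ⟨hn'1, hn'2, hn'3⟩ := hn'mem
  have hUs : ∀ n, U (n + 1) = U n + u (n + 1) := by
    intro n; simp only [hU]; rw [Finset.sum_range_succ]
  have hVs : ∀ m, V (m + 1) = V m + v (m + 1) := by
    intro m; simp only [hV]; rw [Finset.sum_range_succ]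
  rcases Nat.lt_or_ge nk n' with hcase | hcase
  · -- nk < n' : the increment is u (nk + 1)
    have hn'pos : 1 ≤ n' := by omega
    have hup0 : U (n' - 1) + V (k - (n' - 1)) ≤ W k :=
      hle k (n' - 1) (by omega) (by omega) (by omega)
    have hU' : U n' = U (n' - 1) + u n' := by
      have := hUs (n' - 1)
      rwa [show n' - 1 + 1 = n' from by omega] at this
    have hVeq : V (k + 1 - n') = V (k - (n' - 1)) := by
      rw [show k + 1 - n' = k - (n' - 1) from by omega]
    have hup : W (k + 1) ≤ W k + u n' := by
      rw [hn'eq, hU', hVeq]; omega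
    have hlow : W k + u (nk + 1) ≤ W (k + 1) := by
      have h1 : U (nk + 1) + V (k + 1 - (nk + 1)) ≤ W (k + 1) :=
        hle (k + 1) (nk + 1) (by omega) (by omega) (by omega)
      rw [show k + 1 - (nk + 1) = k - nk from by omega, hUs nk] at h1
      rw [hnkeq]; omega
    have hmon : u n' ≤ u (nk + 1) := by
      have := humono (nk + 1) (n' - (nk + 1)) (by omega) (by omega)
      rwa [show nk + 1 + (n' - (nk + 1)) = n' from by omega] at this
    have heq : W (k + 1) - W k = u (nk + 1) := by omega
    rw [Multiset.mem_add]
    left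
    rw [Multiset.mem_map]
    exact ⟨nk, Multiset.mem_range.mpr (by omega), heq.symm⟩
  · -- n' ≤ nk : the increment is v (k - nk + 1)
    have hm' : k - nk + 1 ≤ k + 1 - n' := by omega
    have hup0 : U n' + V (k - n') ≤ W k :=
      hle k n' (by omega) (by omega) (by omega)
    have hV' : V (k + 1 - n') = V (k - n') + v (k + 1 - n') := by
      have := hVs (k - n')
      rwa [show k - n' + 1 = k + 1 - n' from by omega] at this
    have hup : W (k + 1) ≤ W k + v (k + 1 - n') := by
      rw [hn'eq, hV']; omega
    have hlow : W k + v (k - nk + 1) ≤ W (k + 1) := by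
      have h1 : U nk + V (k + 1 - nk) ≤ W (k + 1) :=
        hle (k + 1) nk (by omega) (by omega) (by omega)
      rw [show k + 1 - nk = k - nk + 1 from by omega, hVs (k - nk)] at h1
      rw [hnkeq]; omega
    have hmon : v (k + 1 - n') ≤ v (k - nk + 1) := by
      have := hvmono (k - nk + 1) ((k + 1 - n') - (k - nk + 1)) (by omega) (by omega)
      rwa [show k - nk + 1 + ((k + 1 - n') - (k - nk + 1)) = k + 1 - n' from by omega] at this
    have heq : W (k + 1) - W k = v (k - nk + 1) := by omega
    rw [Multiset.mem_add]
    right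
    rw [Multiset.mem_map]
    exact ⟨k - nk, Multiset.mem_range.mpr (by omega), heq.symm⟩
end

section
/- Not every rational gradient between 0 and 1 arises as the gradient of a line segment of a discrete circle: the rational 5/8 is a counterexample. Precisely: there is no natural number n ≥ 1 with (5 : ℚ)/8 = 1/n; there are no natural numbers a ≥ 1, n ≥ 1 with (5 : ℚ)/8 = a/(a·(n+1) − 1); and there are no natural numbers a ≥ 1, n ≥ 1 with (5 : ℚ)/8 = a/(a·n + 1). -/
/-- Not every rational gradient between 0 and 1 arises as the gradient of a
line segment of a discrete circle: `5/8` is a counterexample, as it is of none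
of the forms `1/n`, `a/(a(n+1)-1)`, `a/(an+1)`. -/
theorem five_eighths_not_a_gradient :
    (¬ ∃ n : ℕ, 1 ≤ n ∧ (5 : ℚ) / 8 = 1 / n) ∧
    (¬ ∃ a n : ℕ, 1 ≤ a ∧ 1 ≤ n ∧
      (5 : ℚ) / 8 = (a : ℚ) / ((a * (n + 1) - 1 : ℕ) : ℚ)) ∧
    (¬ ∃ a n : ℕ, 1 ≤ a ∧ 1 ≤ n ∧
      (5 : ℚ) / 8 = (a : ℚ) / ((a * n + 1 : ℕ) : ℚ)) := by
  refine ⟨?_, ?_, ?_⟩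
  · rintro ⟨n, hn, h⟩
    have hn0 : (n : ℚ) ≠ 0 := by positivity
    rw [div_eq_div_iff (by norm_num) hn0] at h
    have h' : 5 * n = 8 := by exact_mod_cast h
    omega
  · rintro ⟨a, n, ha, hn, h⟩
    have hd : 1 ≤ a * (n + 1) - 1 := by
      have : 1 * 2 ≤ a * (n + 1) := Nat.mul_le_mul ha (by omega)
      omega
    have hd0 : ((a * (n + 1) - 1 : ℕ) : ℚ) ≠ 0 := by
      exact Nat.cast_ne_zero.mpr (by omega)
    rw [div_eq_div_iff (by norm_num) hd0] at h
    have h' : 5 * (a * (n + 1) - 1) = a * 8 := by exact_mod_cast h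
    have hk : 2 * a ≤ a * (n + 1) := by
      calc 2 * a = a * 2 := by ring
      _ ≤ a * (n + 1) := Nat.mul_le_mul_left a (by omega)
    omega
  · rintro ⟨a, n, ha, hn, h⟩
    have hd0 : ((a * n + 1 : ℕ) : ℚ) ≠ 0 := Nat.cast_ne_zero.mpr (by omega)
    rw [div_eq_div_iff (by norm_num) hd0] at h
    have h' : 5 * (a * n + 1) = a * 8 := by exact_mod_cast h
    have hk : 2 * a ≤ a * n ∨ a * n = a := by
      rcases Nat.lt_or_ge n 2 with h2 | h2
      · right; have : n = 1 := by omega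
        simp [this]
      · left
        calc 2 * a = a * 2 := by ring
        _ ≤ a * n := Nat.mul_le_mul_left a h2
    omega
end

section
/- Gradient of the moiré pattern: let m₀, m₁, c₀, c₁, w₀, w₁, k, k' be real numbers with m₀ ≠ m₁ and w₀ ≠ w₁. Suppose (x₀, y₀) is the intersection of the lines y = m₀x + c₀ + k·w₀ and y = m₁x + c₁ + k'·w₁ (i.e. y₀ = m₀x₀ + c₀ + k·w₀ and y₀ = m₁x₀ + c₁ + k'·w₁), and (x₁, y₁) is the intersection of the lines y = m₀x + c₀ + (k+1)·w₀ and y = m₁x + c₁ + (k'+1)·w₁. Then x₁ ≠ x₀ and (y₁ − y₀)/(x₁ − x₀) = (w₀·m₁ − w₁·m₀)/(w₀ − w₁). -/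
/-- Gradient of the moiré pattern: the line through the intersection of lines
`k` and `k'` and the intersection of lines `k+1` and `k'+1` has gradient
`(w₀·m₁ − w₁·m₀)/(w₀ − w₁)`. -/
theorem moire_gradient (m₀ m₁ c₀ c₁ w₀ w₁ k k' x₀ y₀ x₁ y₁ : ℝ)
    (hm : m₀ ≠ m₁) (hw : w₀ ≠ w₁)
    (h00 : y₀ = m₀ * x₀ + c₀ + k * w₀)
    (h01 : y₀ = m₁ * x₀ + c₁ + k' * w₁)
    (h10 : y₁ = m₀ * x₁ + c₀ + (k + 1) * w₀)
    (h11 : y₁ = m₁ * x₁ + c₁ + (k' + 1) * w₁) :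
    x₁ ≠ x₀ ∧ (y₁ - y₀) / (x₁ - x₀) = (w₀ * m₁ - w₁ * m₀) / (w₀ - w₁) := by
  have hmd : m₀ - m₁ ≠ 0 := sub_ne_zero.mpr hm
  have hwd : w₀ - w₁ ≠ 0 := sub_ne_zero.mpr hw
  have key : (m₀ - m₁) * (x₁ - x₀) = w₁ - w₀ := by
    linear_combination h00 - h01 - h10 + h11
  have hx : x₁ - x₀ ≠ 0 := by
    intro h
    apply hwd
    have := key
    rw [h, mul_zero] at this
    linarith
  refine ⟨sub_ne_zero.mp hx, ?_⟩
  have hy : y₁ - y₀ = m₀ * (x₁ - x₀) + w₀ := by linear_combination h10 - h00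
  field_simp
  linear_combination (w₀ - w₁) * hy + w₀ * key
end

section
/- Gradient of the anti-moiré pattern: let m₀, m₁, c₀, c₁, w₀, w₁, k, k' be real numbers with m₀ ≠ m₁ and w₀ + w₁ ≠ 0. Suppose (x₀, y₀) is the intersection of the lines y = m₀x + c₀ + k·w₀ and y = m₁x + c₁ + (k'+1)·w₁ (i.e. y₀ = m₀x₀ + c₀ + k·w₀ and y₀ = m₁x₀ + c₁ + (k'+1)·w₁), and (x₁, y₁) is the intersection of the lines y = m₀x + c₀ + (k+1)·w₀ and y = m₁x + c₁ + k'·w₁. Then x₁ ≠ x₀ and (y₁ − y₀)/(x₁ − x₀) = (w₀·m₁ + w₁·m₀)/(w₀ + w₁). -/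
/-- Gradient of the anti-moiré pattern: the line through the intersection of
lines `k` and `k'+1` and the intersection of lines `k+1` and `k'` has gradient
`(w₀·m₁ + w₁·m₀)/(w₀ + w₁)`. -/
theorem anti_moire_gradient (m₀ m₁ c₀ c₁ w₀ w₁ k k' x₀ y₀ x₁ y₁ : ℝ)
    (hm : m₀ ≠ m₁) (hw : w₀ + w₁ ≠ 0)
    (h00 : y₀ = m₀ * x₀ + c₀ + k * w₀)
    (h01 : y₀ = m₁ * x₀ + c₁ + (k' + 1) * w₁)
    (h10 : y₁ = m₀ * x₁ + c₀ + (k + 1) * w₀)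
    (h11 : y₁ = m₁ * x₁ + c₁ + k' * w₁) :
    x₁ ≠ x₀ ∧ (y₁ - y₀) / (x₁ - x₀) = (w₀ * m₁ + w₁ * m₀) / (w₀ + w₁) := by
  have hx : (m₀ - m₁) * (x₁ - x₀) = -(w₀ + w₁) := by nlinarith [h00, h01, h10, h11]
  have hne : x₁ ≠ x₀ := by
    intro h
    rw [h] at hx
    simp at hx
    exact hw (by linarith)
  refine ⟨hne, ?_⟩
  have hxs : x₁ - x₀ ≠ 0 := sub_ne_zero.mpr hne
  have hy : y₁ - y₀ = m₀ * (x₁ - x₀) + w₀ := by linarith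
  field_simp [hy]
  linear_combination w₀ * hx + (w₀ + w₁) * hy
end
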